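/- arXiv:1708.07713 — 2 statements merged into one kernel-verified Lean document; each statement's English description precedes it below -/
import Mathlib

section
/- Let ρ be a Finsler metric on an isometry-invariant open set G ⊆ H with 0 ∉ G. Then ρ is isometry-invariant if and only if there exists a function λ : (0,∞) × ℝ × ℝ → ℝ, written λ_r(p,q), such that: (1) λ_r(t·p, t·q) = t·λ_r(p,q) for all r > 0, p,q ∈ ℝ, t ≥ 0; (2) λ_r(−p, q) = λ_r(p, −q) = λ_r(p, q) for all r > 0, p,q ∈ ℝ; and (3) ρ_g(h) = λ_{‖g‖}(|⟨h,g⟩|, √(‖h‖²·‖g‖² − |⟨h,g⟩|²)) for every g ∈ G and h ∈ H. -/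
/-!
Isometries act transitively on pairs `(g, h)` with prescribed `‖g‖`, `‖h‖` and `⟪g, h⟫`: the map
`a • g + b • h ↦ a • g' + b • h'` is well defined and isometric on `span {g, h}` because the two
Gram matrices agree, and it extends to an isometry of the whole space, first inside the
finite-dimensional `span {g, h, g', h'}` and then by the identity on its orthogonal complement.
Replacing `h` by a unimodular multiple adjusts the phase of `⟪g, h⟫`, so an invariant Finsler
metric `ρ g h` depends only on `‖g‖`, `‖h‖` and `‖⟪g, h⟫‖`. The function `λ` is read off from
pairs with `‖g‖ * ‖h‖ = 1` and extended by homogeneity. Conversely, isometries preserve all three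
quantities and `G`.
-/

def IsInvariantOpen {H : Type*} [NormedAddCommGroup H] (G : Set H) : Prop :=
  ∃ R : Set ℝ, IsOpen {r : Set.Ici (0 : ℝ) | (r : ℝ) ∈ R} ∧ G = {x : H | ‖x‖ ∈ R}

theorem IsInvariantOpen.map_mem {H : Type*} [NormedAddCommGroup H] {G : Set H}
    (hG : IsInvariantOpen G) {f : H → H} (hf : ∀ x, ‖f x‖ = ‖x‖) {g : H} (hg : g ∈ G) :
    f g ∈ G := by
  obtain ⟨R, -, rfl⟩ := hG
  simpa only [Set.mem_ofPred_eq, hf] using hg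

open scoped InnerProductSpace

section

variable {𝕜 E : Type*} [RCLike 𝕜] [NormedAddCommGroup E] [InnerProductSpace 𝕜 E]

theorem Submodule.exists_linearIsometry_extend (K : Submodule 𝕜 E) [K.HasOrthogonalProjection]
    (U : K →ₗᵢ[𝕜] K) : ∃ T : E →ₗᵢ[𝕜] E, ∀ x : K, T x = U x := by
  let f : E →ₗ[𝕜] E := K.subtype ∘ₗ U.toLinearMap ∘ₗ K.orthogonalProjectionOnto.toLinearMap
    + Kᗮ.starProjection.toLinearMap
  have hf : ∀ x, ‖f x‖ = ‖x‖ := by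
    intro x
    have horth : ⟪(U (K.orthogonalProjectionOnto x) : E), Kᗮ.starProjection x⟫_𝕜 = 0 :=
      Submodule.inner_right_of_mem_orthogonal (U _).2 (Kᗮ.starProjection_apply_mem x)
    have hsq : ‖f x‖ ^ 2 = ‖x‖ ^ 2 := by
      calc ‖f x‖ ^ 2
          = ‖(U (K.orthogonalProjectionOnto x) : E)‖ ^ 2 + ‖Kᗮ.starProjection x‖ ^ 2 := by
            simp only [sq]
            exact norm_add_sq_eq_norm_sq_add_norm_sq_of_inner_eq_zero _ _ horth
        _ = ‖x‖ ^ 2 := by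
            rw [Submodule.norm_coe, U.norm_map, K.norm_sq_eq_add_norm_sq_projection x]
            rfl
    exact (pow_left_inj₀ (norm_nonneg _) (norm_nonneg _) two_ne_zero).1 hsq
  refine ⟨⟨f, hf⟩, fun x => ?_⟩
  simp [f]

theorem LinearIsometry.exists_extend_of_finiteDimensional {S : Submodule 𝕜 E}
    [FiniteDimensional 𝕜 S] (L : S →ₗᵢ[𝕜] E) : ∃ T : E →ₗᵢ[𝕜] E, ∀ s : S, T s = L s := by
  let K := S ⊔ LinearMap.range L.toLinearMap
  have hSK : S ≤ K := le_sup_left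
  have hLK : ∀ s, L s ∈ K := fun s => Submodule.mem_sup_right ⟨s, rfl⟩
  let S' : Submodule 𝕜 K := S.comap K.subtype
  let L' : S' →ₗᵢ[𝕜] K :=
    { toLinearMap := (L.toLinearMap ∘ₗ K.subtype.restrict (fun x hx => hx)).codRestrict _
        fun x => hLK _
      norm_map' := fun x => by simp }
  obtain ⟨T, hT⟩ := K.exists_linearIsometry_extend L'.extend
  refine ⟨T, fun s => ?_⟩
  rw [hT ⟨s, hSK s.2⟩, LinearIsometry.extend_apply L' ⟨⟨s, hSK s.2⟩, s.2⟩]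
  rfl

theorem LinearMap.exists_linearIsometry_range_of_norm_eq {M : Type*} [AddCommGroup M]
    [Module 𝕜 M] (ℓ ℓ' : M →ₗ[𝕜] E) (h : ∀ m, ‖ℓ' m‖ = ‖ℓ m‖) :
    ∃ u : LinearMap.range ℓ →ₗᵢ[𝕜] E, ∀ m, u ⟨ℓ m, LinearMap.mem_range_self ℓ m⟩ = ℓ' m := by
  have hker : LinearMap.ker ℓ ≤ LinearMap.ker ℓ' := fun m hm => by
    rw [LinearMap.mem_ker, ← norm_eq_zero, h, norm_eq_zero, ← LinearMap.mem_ker]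
    exact hm
  let u : LinearMap.range ℓ →ₗ[𝕜] E :=
    (LinearMap.ker ℓ).liftQ ℓ' hker ∘ₗ ℓ.quotKerEquivRange.symm.toLinearMap
  have hu : ∀ m, u ⟨ℓ m, LinearMap.mem_range_self ℓ m⟩ = ℓ' m := fun m => by
    simp only [u, LinearMap.coe_comp, Function.comp_apply, LinearEquiv.coe_coe,
      LinearMap.quotKerEquivRange_symm_apply_image]
    exact Submodule.liftQ_apply _ _ _
  refine ⟨⟨u, ?_⟩, hu⟩
  rintro ⟨_, m, rfl⟩
  rw [hu, h]
  rfl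

theorem norm_smul_add_smul_eq_of_inner_eq {g h g' h' : E} (hg : ‖g‖ = ‖g'‖) (hh : ‖h‖ = ‖h'‖)
    (hgh : ⟪g, h⟫_𝕜 = ⟪g', h'⟫_𝕜) (a b : 𝕜) : ‖a • g + b • h‖ = ‖a • g' + b • h'‖ := by
  have hgg : ⟪g, g⟫_𝕜 = ⟪g', g'⟫_𝕜 := by simp only [inner_self_eq_norm_sq_to_K, hg]
  have hhh : ⟪h, h⟫_𝕜 = ⟪h', h'⟫_𝕜 := by simp only [inner_self_eq_norm_sq_to_K, hh]
  have hhg : ⟪h, g⟫_𝕜 = ⟪h', g'⟫_𝕜 := by rw [← inner_conj_symm, hgh, inner_conj_symm]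
  rw [norm_eq_sqrt_re_inner (𝕜 := 𝕜), norm_eq_sqrt_re_inner (𝕜 := 𝕜)]
  simp only [inner_add_left, inner_add_right, inner_smul_left, inner_smul_right,
    hgg, hhh, hgh, hhg]

theorem exists_linearIsometry_apply_eq_of_inner_eq {g h g' h' : E} (hg : ‖g‖ = ‖g'‖)
    (hh : ‖h‖ = ‖h'‖) (hgh : ⟪g, h⟫_𝕜 = ⟪g', h'⟫_𝕜) :
    ∃ T : E →ₗᵢ[𝕜] E, T g = g' ∧ T h = h' := by
  let ℓ := (LinearMap.toSpanSingleton 𝕜 E g).coprod (LinearMap.toSpanSingleton 𝕜 E h)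
  let ℓ' := (LinearMap.toSpanSingleton 𝕜 E g').coprod (LinearMap.toSpanSingleton 𝕜 E h')
  obtain ⟨u, hu⟩ := ℓ.exists_linearIsometry_range_of_norm_eq ℓ' fun m =>
    (norm_smul_add_smul_eq_of_inner_eq hg hh hgh m.1 m.2).symm
  obtain ⟨T, hT⟩ := u.exists_extend_of_finiteDimensional
  refine ⟨T, ?_, ?_⟩
  · simpa [ℓ, ℓ'] using (hT _).trans (hu (1, 0))
  · simpa [ℓ, ℓ'] using (hT _).trans (hu (0, 1))

theorem RCLike.exists_norm_eq_one_mul_eq {a b : 𝕜} (h : ‖a‖ = ‖b‖) :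
    ∃ c : 𝕜, ‖c‖ = 1 ∧ c * a = b := by
  obtain ⟨c₁, hc₁, ha⟩ := RCLike.exists_norm_eq_mul_self a
  obtain ⟨c₂, hc₂, hb⟩ := RCLike.exists_norm_mul_eq_self b
  refine ⟨c₂ * c₁, by rw [norm_mul, hc₁, hc₂, one_mul], ?_⟩
  rw [mul_assoc, ← ha, h, hb]

variable (G : Set E) (ρ : E → E → ℝ)

theorem apply_eq_of_norm_inner_eq
    (hFinsler : ∀ g ∈ G, ∀ h : E, ∀ r : 𝕜, ρ g (r • h) = ‖r‖ * ρ g h)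
    (hinv : ∀ T : E →ₗᵢ[𝕜] E, ∀ g ∈ G, ∀ h : E, ρ (T g) (T h) = ρ g h)
    {g h g' h' : E} (hg : g ∈ G) (hgg : ‖g‖ = ‖g'‖) (hhh : ‖h‖ = ‖h'‖)
    (hgh : ‖⟪g, h⟫_𝕜‖ = ‖⟪g', h'⟫_𝕜‖) : ρ g h = ρ g' h' := by
  obtain ⟨c, hc, hcgh⟩ := RCLike.exists_norm_eq_one_mul_eq hgh
  obtain ⟨T, rfl, rfl⟩ := exists_linearIsometry_apply_eq_of_inner_eq hgg
    (by rwa [norm_smul, hc, one_mul]) (by rwa [inner_smul_right] : ⟪g, c • h⟫_𝕜 = ⟪g', h'⟫_𝕜)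
  rw [hinv T g hg, hFinsler g hg h c, hc, one_mul]

variable (𝕜) in
open Classical in
noncomputable def finslerUnitProfile (r c : ℝ) : ℝ :=
  if hx : ∃ x : E × E, x.1 ∈ G ∧ ‖x.1‖ = r ∧ ‖x.1‖ * ‖x.2‖ = 1 ∧ ‖⟪x.1, x.2⟫_𝕜‖ = c
  then ρ hx.choose.1 hx.choose.2 else 0

variable (𝕜) in
/-- `√(p ^ 2 + q ^ 2)` plays the role of `‖g‖ * ‖h‖`, so `|p| / √(p ^ 2 + q ^ 2)` is the inner
product after rescaling `h` to `‖g‖ * ‖h‖ = 1`. At `p = q = 0` the division is junk, but it is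
multiplied by `0`. -/
noncomputable def finslerProfile (r p q : ℝ) : ℝ :=
  √(p ^ 2 + q ^ 2) * finslerUnitProfile 𝕜 G ρ r (|p| / √(p ^ 2 + q ^ 2))

theorem finslerUnitProfile_eq
    (hFinsler : ∀ g ∈ G, ∀ h : E, ∀ r : 𝕜, ρ g (r • h) = ‖r‖ * ρ g h)
    (hinv : ∀ T : E →ₗᵢ[𝕜] E, ∀ g ∈ G, ∀ h : E, ρ (T g) (T h) = ρ g h)
    {g h : E} (hg : g ∈ G) (hgh : ‖g‖ * ‖h‖ = 1) :
    finslerUnitProfile 𝕜 G ρ ‖g‖ ‖⟪g, h⟫_𝕜‖ = ρ g h := by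
  have hx : ∃ x : E × E, x.1 ∈ G ∧ ‖x.1‖ = ‖g‖ ∧ ‖x.1‖ * ‖x.2‖ = 1 ∧
      ‖⟪x.1, x.2⟫_𝕜‖ = ‖⟪g, h⟫_𝕜‖ := ⟨(g, h), hg, rfl, hgh, rfl⟩
  rw [finslerUnitProfile, dif_pos hx]
  obtain ⟨hg', hgg', hgh', hinner⟩ := hx.choose_spec
  generalize hx.choose = x at hg' hgg' hgh' hinner ⊢
  refine apply_eq_of_norm_inner_eq G ρ hFinsler hinv hg' hgg' ?_ hinner
  exact mul_left_cancel₀ (left_ne_zero_of_mul_eq_one hgh') (by rw [hgh', hgg', hgh])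

theorem finslerProfile_mul_mul (r p q : ℝ) {t : ℝ} (ht : 0 ≤ t) :
    finslerProfile 𝕜 G ρ r (t * p) (t * q) = t * finslerProfile 𝕜 G ρ r p q := by
  have hN : √((t * p) ^ 2 + (t * q) ^ 2) = t * √(p ^ 2 + q ^ 2) := by
    rw [show (t * p) ^ 2 + (t * q) ^ 2 = t ^ 2 * (p ^ 2 + q ^ 2) by ring,
      Real.sqrt_mul (sq_nonneg t), Real.sqrt_sq ht]
  rcases ht.eq_or_lt with rfl | ht
  · simp [finslerProfile]
  · rw [finslerProfile, finslerProfile, hN, abs_mul, abs_of_pos ht,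
      mul_div_mul_left _ _ ht.ne', mul_assoc]

theorem finslerProfile_neg_left (r p q : ℝ) :
    finslerProfile 𝕜 G ρ r (-p) q = finslerProfile 𝕜 G ρ r p q := by
  simp only [finslerProfile, neg_sq, abs_neg]

theorem finslerProfile_neg_right (r p q : ℝ) :
    finslerProfile 𝕜 G ρ r p (-q) = finslerProfile 𝕜 G ρ r p q := by
  simp only [finslerProfile, neg_sq]

theorem apply_eq_finslerProfile (h0G : (0 : E) ∉ G)
    (hFinsler : ∀ g ∈ G, ∀ h : E, ∀ r : 𝕜, ρ g (r • h) = ‖r‖ * ρ g h)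
    (hinv : ∀ T : E →ₗᵢ[𝕜] E, ∀ g ∈ G, ∀ h : E, ρ (T g) (T h) = ρ g h)
    {g : E} (hg : g ∈ G) (h : E) :
    ρ g h = finslerProfile 𝕜 G ρ ‖g‖ ‖⟪g, h⟫_𝕜‖ √(‖h‖ ^ 2 * ‖g‖ ^ 2 - ‖⟪g, h⟫_𝕜‖ ^ 2) := by
  set N := ‖g‖ * ‖h‖ with hN
  have hCS : ‖⟪g, h⟫_𝕜‖ ≤ N := norm_inner_le_norm g h
  have hsqrt : √(‖⟪g, h⟫_𝕜‖ ^ 2 + √(‖h‖ ^ 2 * ‖g‖ ^ 2 - ‖⟪g, h⟫_𝕜‖ ^ 2) ^ 2) = N := by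
    rw [Real.sq_sqrt (by nlinarith [norm_nonneg (⟪g, h⟫_𝕜)]),
      show ‖⟪g, h⟫_𝕜‖ ^ 2 + (‖h‖ ^ 2 * ‖g‖ ^ 2 - ‖⟪g, h⟫_𝕜‖ ^ 2) = N ^ 2 by ring,
      Real.sqrt_sq (by positivity)]
  rw [finslerProfile, abs_norm, hsqrt]
  rcases eq_or_ne h 0 with rfl | hh
  · simpa [hN] using hFinsler g hg 0 0
  have hNpos : 0 < N :=
    mul_pos (norm_pos_iff.2 (ne_of_mem_of_not_mem hg h0G)) (norm_pos_iff.2 hh)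
  set h₁ : E := ((N⁻¹ : ℝ) : 𝕜) • h
  have hρ : ρ g h = N * ρ g h₁ := by
    rw [hFinsler g hg h, RCLike.norm_ofReal, abs_inv, abs_of_pos hNpos,
      mul_inv_cancel_left₀ hNpos.ne']
  have hinner : ‖⟪g, h₁⟫_𝕜‖ = ‖⟪g, h⟫_𝕜‖ / N := by
    rw [inner_smul_right, norm_mul, RCLike.norm_ofReal, abs_inv, abs_of_pos hNpos,
      inv_mul_eq_div]
  have hunit : ‖g‖ * ‖h₁‖ = 1 := by
    rw [norm_smul, RCLike.norm_ofReal, abs_inv, abs_of_pos hNpos, mul_left_comm, ← hN,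
      inv_mul_cancel₀ hNpos.ne']
  rw [hρ, ← hinner, finslerUnitProfile_eq G ρ hFinsler hinv hg hunit]

end

/-- a Finsler metric `ρ` on an isometry-invariant open set `G` with `0 ∉ G`
is isometry-invariant iff there is `λ : (0,∞) × ℝ² → ℝ` which is positively homogeneous,
even in each of the last two variables, and such that
`ρ_g(h) = λ_{‖g‖}(|⟨h,g⟩|, √(‖h‖²‖g‖² − |⟨h,g⟩|²))`. -/
theorem stmt2 {𝕜 H : Type*} [RCLike 𝕜] [NormedAddCommGroup H] [InnerProductSpace 𝕜 H]
    (G : Set H) (hG : IsInvariantOpen G) (h0G : (0 : H) ∉ G)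
    (ρ : H → H → ℝ)
    (hFinsler : ∀ g ∈ G, ∀ h : H, ∀ r : 𝕜, ρ g (r • h) = ‖r‖ * ρ g h) :
    (∀ T : H →ₗᵢ[𝕜] H, ∀ g ∈ G, ∀ h : H, ρ (T g) (T h) = ρ g h) ↔
      ∃ lam : ℝ → ℝ → ℝ → ℝ,
        (∀ r > (0 : ℝ), ∀ p q : ℝ, ∀ t : ℝ, 0 ≤ t →
          lam r (t * p) (t * q) = t * lam r p q) ∧
        (∀ r > (0 : ℝ), ∀ p q : ℝ, lam r (-p) q = lam r p q ∧ lam r p (-q) = lam r p q) ∧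
        (∀ g ∈ G, ∀ h : H,
          ρ g h = lam ‖g‖ ‖(inner 𝕜 g h : 𝕜)‖
            (Real.sqrt (‖h‖ ^ 2 * ‖g‖ ^ 2 - ‖(inner 𝕜 g h : 𝕜)‖ ^ 2))) := by
  constructor
  · intro hinv
    exact ⟨finslerProfile 𝕜 G ρ, fun r _ p q _ ht => finslerProfile_mul_mul G ρ r p q ht,
      fun r _ p q => ⟨finslerProfile_neg_left G ρ r p q, finslerProfile_neg_right G ρ r p q⟩,
      fun g hg h => apply_eq_finslerProfile G ρ h0G hFinsler hinv hg h⟩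
  · rintro ⟨lam, -, -, hrep⟩ T g hg h
    rw [hrep g hg h, hrep (T g) (hG.map_mem T.norm_map hg) (T h)]
    simp only [T.norm_map, LinearIsometry.inner_map_map]
end

section
/- Let ρ be an isometry-invariant Finsler metric on H \ {0} such that for each fixed h ∈ H the map g ↦ ρ_g(h) is continuous on H \ {0}. Suppose ρ is invariant with respect to the homotheties x ↦ α·x and x ↦ β·x, where α, β > 0, ln α ≠ 0, ln β ≠ 0, and (ln α)/(ln β) is irrational. Then ρ is invariant with respect to every congruence of H; in particular, there exists a function ϑ : [0, π/2] → ℝ such that ρ_g(h) = (‖h‖/‖g‖)·ϑ(∠(g,h)) for all nonzero g, h ∈ H. -/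
/-! Along a ray, invariance under the homothety with coefficient `t > 0` makes
`s ↦ exp s * ρ (exp s • g) h` periodic with period `log t`. Periods `log α` and `log β` with
irrational ratio generate a dense subgroup of `ℝ`, so by continuity this function is constant
and `ρ` is invariant under every positive homothety. An arbitrary congruence `c • T` is then
`‖c‖` times the isometry `(c / ‖c‖) • T`.

For the angle function: two pairs `(g, h)`, `(g', h')` with `‖g‖ = ‖g'‖`, `‖h‖ = ‖h'‖` and
`⟪g, h⟫ = ⟪g', h'⟫` are related by an isometry of `H`, built from reflections and phase
rotations on lines. After normalising `g` and `h` and turning the phase of `h` so that `⟪g, h⟫`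
becomes `cos ∠(g, h)`, the quantity `‖g‖ / ‖h‖ * ρ g h` depends only on `∠(g, h)`.
-/

/-- The acute angle `∠(g,h) = arccos(|⟨h,g⟩| / (‖h‖‖g‖))` between nonzero vectors. -/
noncomputable def acuteAngle (𝕜 : Type*) {H : Type*} [RCLike 𝕜] [NormedAddCommGroup H]
    [InnerProductSpace 𝕜 H] (g h : H) : ℝ :=
  Real.arccos (‖(inner 𝕜 g h : 𝕜)‖ / (‖h‖ * ‖g‖))

theorem Function.Periodic.eq_of_irrational_div {X : Type*} [TopologicalSpace X] [T2Space X]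
    {f : ℝ → X} {a b : ℝ} (hf : Continuous f) (ha : Function.Periodic f a)
    (hb : Function.Periodic f b) (hab : Irrational (a / b)) (x y : ℝ) : f x = f y := by
  let periods : AddSubgroup ℝ :=
    { carrier := {p | Function.Periodic f p}
      add_mem' := Function.Periodic.add_period
      zero_mem' := fun x => by simp
      neg_mem' := Function.Periodic.neg }
  have hle : AddSubgroup.closure {a, b} ≤ periods :=
    (AddSubgroup.closure_le _).2 (Set.insert_subset ha (Set.singleton_subset_iff.2 hb))
  have hconst : f = fun _ => f 0 :=
    hf.ext_on (dense_addSubgroupClosure_pair_iff.2 hab) continuous_const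
      fun p hp => by simpa using hle hp 0
  exact (congrFun hconst x).trans (congrFun hconst y).symm

open Submodule
open scoped InnerProductSpace

section

variable {𝕜 H : Type*} [RCLike 𝕜] [NormedAddCommGroup H] [InnerProductSpace 𝕜 H]

namespace Submodule

theorem norm_add_sq_of_mem_of_mem_orthogonal {K : Submodule 𝕜 H} {x y : H} (hx : x ∈ K)
    (hy : y ∈ Kᗮ) : ‖x + y‖ ^ 2 = ‖x‖ ^ 2 + ‖y‖ ^ 2 := by
  simpa only [sq] using
    norm_add_sq_eq_norm_sq_add_norm_sq_of_inner_eq_zero x y (inner_right_of_mem_orthogonal hx hy)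

noncomputable def smulOnIsometry (K : Submodule 𝕜 H) [K.HasOrthogonalProjection] (u : 𝕜)
    (hu : ‖u‖ = 1) : H →ₗᵢ[𝕜] H where
  toLinearMap := u • (K.starProjection : H →ₗ[𝕜] H) + (Kᗮ.starProjection : H →ₗ[𝕜] H)
  norm_map' x := by
    have hPx := K.starProjection_apply_mem x
    have hQx := Kᗮ.starProjection_apply_mem x
    refine (sq_eq_sq₀ (norm_nonneg _) (norm_nonneg _)).1 ?_
    conv_rhs => rw [← K.starProjection_add_starProjection_orthogonal x]
    simp only [LinearMap.add_apply, LinearMap.smul_apply, ContinuousLinearMap.coe_coe]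
    rw [norm_add_sq_of_mem_of_mem_orthogonal (K.smul_mem u hPx) hQx,
      norm_add_sq_of_mem_of_mem_orthogonal hPx hQx, norm_smul, hu, one_mul]

variable {K : Submodule 𝕜 H} [K.HasOrthogonalProjection] {u : 𝕜} {hu : ‖u‖ = 1} {x : H}

theorem smulOnIsometry_apply_of_mem (hx : x ∈ K) : K.smulOnIsometry u hu x = u • x := by
  simp [smulOnIsometry, (starProjection_eq_self_iff).2 hx,
    starProjection_orthogonal_val, sub_self]

theorem smulOnIsometry_apply_of_mem_orthogonal (hx : x ∈ Kᗮ) : K.smulOnIsometry u hu x = x := by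
  simp [smulOnIsometry, (starProjection_eq_self_iff).2 hx,
    (K.starProjection_apply_eq_zero_iff).2 hx]

/-- Over `ℂ` the hypothesis `⟪x, y⟫_𝕜 = ⟪y, x⟫_𝕜` says that `⟪x, y⟫_𝕜` is real. -/
theorem reflection_sub_of_inner_comm {x y : H} (hn : ‖x‖ = ‖y‖) (hc : ⟪x, y⟫_𝕜 = ⟪y, x⟫_𝕜) :
    reflection (𝕜 ∙ (x - y))ᗮ x = y := by
  set R := reflection (𝕜 ∙ (x - y))ᗮ
  suffices h : R x + R x = y + y by
    apply smul_right_injective H (two_ne_zero : (2 : 𝕜) ≠ 0)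
    simpa [two_smul] using h
  have h₁ : R (x - y) = -(x - y) := reflection_orthogonalComplement_singleton_eq_neg (x - y)
  have h₂ : R (x + y) = x + y := by
    apply reflection_mem_subspace_eq_self
    rw [mem_orthogonal_singleton_iff_inner_left, inner_add_left, inner_sub_right,
      inner_sub_right, inner_self_eq_norm_sq_to_K, inner_self_eq_norm_sq_to_K, hn, hc]
    ring
  convert congr_arg₂ (· + ·) h₂ h₁ using 1
  · simp [R]
  · abel

theorem reflection_orthogonal_singleton_apply_of_inner_eq_zero {v x : H} (hx : ⟪v, x⟫_𝕜 = 0) :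
    reflection (𝕜 ∙ v)ᗮ x = x :=
  reflection_mem_subspace_eq_self (mem_orthogonal_singleton_iff_inner_right.2 hx)

end Submodule

theorem exists_linearIsometry_apply_eq_of_norm_eq {x y : H} (hxy : ‖x‖ = ‖y‖) :
    ∃ T : H →ₗᵢ[𝕜] H, T x = y ∧ ∀ z, ⟪x, z⟫_𝕜 = 0 → ⟪y, z⟫_𝕜 = 0 → T z = z := by
  -- the phase `w` makes `⟪w • x, y⟫` real, so that a reflection takes `w • x` to `y`
  obtain ⟨w, hw, hwyx⟩ := RCLike.exists_norm_eq_mul_self ⟪y, x⟫_𝕜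
  have hreal : ⟪w • x, y⟫_𝕜 = ⟪y, w • x⟫_𝕜 := by
    have h : ⟪y, w • x⟫_𝕜 = ‖⟪y, x⟫_𝕜‖ := by rw [inner_smul_right, hwyx]
    rw [← inner_conj_symm, h, RCLike.conj_ofReal]
  set R := reflection (𝕜 ∙ (w • x - y))ᗮ
  refine ⟨R.toLinearIsometry.comp ((𝕜 ∙ x).smulOnIsometry w hw), ?_, fun z hxz hyz => ?_⟩
  · simp only [LinearIsometry.coe_comp, Function.comp_apply,
      smulOnIsometry_apply_of_mem (mem_span_singleton_self x)]
    exact reflection_sub_of_inner_comm (by rw [norm_smul, hw, one_mul, hxy]) hreal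
  · simp only [LinearIsometry.coe_comp, Function.comp_apply,
      smulOnIsometry_apply_of_mem_orthogonal (mem_orthogonal_singleton_iff_inner_right.2 hxz)]
    apply reflection_orthogonal_singleton_apply_of_inner_eq_zero
    rw [inner_sub_left, inner_smul_left, hxz, hyz]
    simp

theorem exists_linearIsometry_apply_eq_pair {g h g' h' : H} (hg : ‖g‖ = ‖g'‖)
    (hh : ‖h‖ = ‖h'‖) (hgh : ⟪g, h⟫_𝕜 = ⟪g', h'⟫_𝕜) :
    ∃ T : H →ₗᵢ[𝕜] H, T g = g' ∧ T h = h' := by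
  obtain ⟨T₁, hT₁g, -⟩ := exists_linearIsometry_apply_eq_of_norm_eq (𝕜 := 𝕜) hg
  set P := (𝕜 ∙ g').starProjection
  set h₂ := T₁ h
  have hP : P h₂ = P h' := by
    have hinner : ⟪g', h₂⟫_𝕜 = ⟪g', h'⟫_𝕜 := by rw [← hgh, ← T₁.inner_map_map g h, hT₁g]
    simp only [P, starProjection_singleton, hinner]
  have hQ₂ : h₂ - P h₂ ∈ (𝕜 ∙ g')ᗮ := sub_starProjection_mem_orthogonal _
  have hQ' : h' - P h' ∈ (𝕜 ∙ g')ᗮ := sub_starProjection_mem_orthogonal _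
  have hnorm : ‖h₂ - P h₂‖ = ‖h' - P h'‖ := by
    have e₂ := norm_add_sq_of_mem_of_mem_orthogonal (starProjection_apply_mem _ h₂) hQ₂
    have e' := norm_add_sq_of_mem_of_mem_orthogonal (starProjection_apply_mem _ h') hQ'
    rw [add_sub_cancel, T₁.norm_map, hh] at e₂
    rw [add_sub_cancel] at e'
    rw [hP] at e₂ ⊢
    exact (sq_eq_sq₀ (norm_nonneg _) (norm_nonneg _)).1 (by linarith)
  obtain ⟨T₂, hT₂, hfix⟩ := exists_linearIsometry_apply_eq_of_norm_eq (𝕜 := 𝕜) hnorm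
  have hT₂g' : T₂ g' = g' :=
    hfix g' (mem_orthogonal_singleton_iff_inner_left.1 hQ₂)
      (mem_orthogonal_singleton_iff_inner_left.1 hQ')
  have hT₂P : T₂ (P h₂) = P h₂ := by
    obtain ⟨c, hc⟩ := mem_span_singleton.1 (starProjection_apply_mem (𝕜 ∙ g') h₂)
    rw [← hc, T₂.map_smul, hT₂g']
  refine ⟨T₂.comp T₁, by simp [hT₁g, hT₂g'], ?_⟩
  calc T₂ h₂ = T₂ (P h₂ + (h₂ - P h₂)) := by rw [add_sub_cancel]
    _ = P h' + (h' - P h') := by rw [map_add, hT₂P, hT₂, hP]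
    _ = h' := add_sub_cancel _ _

theorem acuteAngle_eq_acuteAngle_iff {g h g' h' : H} :
    acuteAngle 𝕜 g h = acuteAngle 𝕜 g' h' ↔
      ‖⟪g, h⟫_𝕜‖ / (‖h‖ * ‖g‖) = ‖⟪g', h'⟫_𝕜‖ / (‖h'‖ * ‖g'‖) := by
  have mem_Icc : ∀ x y : H, ‖⟪x, y⟫_𝕜‖ / (‖y‖ * ‖x‖) ∈ Set.Icc (-1 : ℝ) 1 := fun x y =>
    ⟨by linarith [div_nonneg (norm_nonneg ⟪x, y⟫_𝕜) (by positivity : 0 ≤ ‖y‖ * ‖x‖)],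
      div_le_one_of_le₀ (by simpa [mul_comm] using norm_inner_le_norm (𝕜 := 𝕜) x y)
        (by positivity)⟩
  exact Real.arccos_injOn.eq_iff (mem_Icc g h) (mem_Icc g' h')

theorem exists_norm_eq_inv_norm_inner_smul_eq (g h : H) :
    ∃ b : 𝕜, ‖b‖ = ‖h‖⁻¹ ∧
      ⟪((‖g‖⁻¹ : ℝ) : 𝕜) • g, b • h⟫_𝕜 = ((‖⟪g, h⟫_𝕜‖ / (‖h‖ * ‖g‖) : ℝ) : 𝕜) := by
  obtain ⟨w, hw, hwgh⟩ := RCLike.exists_norm_eq_mul_self ⟪g, h⟫_𝕜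
  refine ⟨w * ((‖h‖⁻¹ : ℝ) : 𝕜), by simp [hw], ?_⟩
  rw [inner_smul_left, inner_smul_right, RCLike.conj_ofReal]
  push_cast
  linear_combination (-((‖g‖ : 𝕜)⁻¹ * (‖h‖ : 𝕜)⁻¹)) * hwgh

variable (𝕜) in
def IsFinslerMetric (ρ : H → H → ℝ) : Prop :=
  ∀ g : H, g ≠ 0 → ∀ h : H, ∀ r : 𝕜, ρ g (r • h) = ‖r‖ * ρ g h

variable (𝕜) in
def IsIsometryInvariant (ρ : H → H → ℝ) : Prop :=
  ∀ T : H →ₗᵢ[𝕜] H, ∀ g : H, g ≠ 0 → ∀ h : H, ρ (T g) (T h) = ρ g h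

variable (𝕜) in
def IsHomothetyInvariant (ρ : H → H → ℝ) (t : ℝ) : Prop :=
  ∀ g : H, g ≠ 0 → ∀ h : H, ρ ((t : 𝕜) • g) ((t : 𝕜) • h) = ρ g h

variable {ρ : H → H → ℝ}

theorem IsFinslerMetric.isHomothetyInvariant_iff (hρ : IsFinslerMetric 𝕜 ρ) {t : ℝ}
    (ht : 0 < t) :
    IsHomothetyInvariant 𝕜 ρ t ↔ ∀ g : H, g ≠ 0 → ∀ h : H, t * ρ ((t : 𝕜) • g) h = ρ g h := by
  have hscale : ∀ g : H, g ≠ 0 → ∀ h : H,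
      ρ ((t : 𝕜) • g) ((t : 𝕜) • h) = t * ρ ((t : 𝕜) • g) h := fun g hg h => by
    rw [hρ _ (smul_ne_zero (by exact_mod_cast ht.ne') hg), RCLike.norm_ofReal, abs_of_pos ht]
  exact forall₂_congr fun g hg => forall_congr' fun h => by rw [hscale g hg h]

theorem IsFinslerMetric.isHomothetyInvariant_of_irrational (hρ : IsFinslerMetric 𝕜 ρ)
    (hcont : ∀ h : H, ContinuousOn (fun g : H => ρ g h) {x : H | x ≠ 0}) {α β : ℝ}
    (hα : 0 < α) (hβ : 0 < β) (hirr : Irrational (Real.log α / Real.log β))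
    (hinvα : IsHomothetyInvariant 𝕜 ρ α) (hinvβ : IsHomothetyInvariant 𝕜 ρ β) {t : ℝ}
    (ht : 0 < t) : IsHomothetyInvariant 𝕜 ρ t := by
  rw [hρ.isHomothetyInvariant_iff ht]
  intro g hg h
  have hne : ∀ s : ℝ, ((Real.exp s : ℝ) : 𝕜) • g ≠ 0 := fun s =>
    smul_ne_zero (by exact_mod_cast (Real.exp_pos s).ne') hg
  let f : ℝ → ℝ := fun s => Real.exp s * ρ (((Real.exp s : ℝ) : 𝕜) • g) h
  have hf : Continuous f :=
    Real.continuous_exp.mul <| (hcont h).comp_continuous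
      ((RCLike.continuous_ofReal.comp Real.continuous_exp).smul continuous_const) hne
  have hperiodic : ∀ γ : ℝ, 0 < γ → IsHomothetyInvariant 𝕜 ρ γ →
      Function.Periodic f (Real.log γ) := by
    intro γ hγ hinvγ s
    have key := (hρ.isHomothetyInvariant_iff hγ).1 hinvγ _ (hne s) h
    rw [smul_comm] at key
    simp only [f, Real.exp_add, Real.exp_log hγ, RCLike.ofReal_mul, mul_smul, ← key]
    ring
  simpa [f, Real.exp_log ht] using
    (Function.Periodic.eq_of_irrational_div hf (hperiodic α hα hinvα) (hperiodic β hβ hinvβ)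
      hirr (Real.log t) 0)

theorem IsIsometryInvariant.apply_eq_of_inner_eq (hρ : IsIsometryInvariant 𝕜 ρ)
    {g h g' h' : H} (hg₀ : g ≠ 0) (hg : ‖g‖ = ‖g'‖) (hh : ‖h‖ = ‖h'‖)
    (hgh : ⟪g, h⟫_𝕜 = ⟪g', h'⟫_𝕜) : ρ g h = ρ g' h' := by
  obtain ⟨T, rfl, rfl⟩ := exists_linearIsometry_apply_eq_pair hg hh hgh
  exact (hρ T g hg₀ h).symm

theorem IsIsometryInvariant.apply_smul_smul (hρ : IsIsometryInvariant 𝕜 ρ)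
    (hhom : ∀ t : ℝ, 0 < t → IsHomothetyInvariant 𝕜 ρ t) {c : 𝕜} (hc : c ≠ 0) {g : H}
    (hg : g ≠ 0) (h : H) : ρ (c • g) (c • h) = ρ g h := by
  obtain ⟨u, hu, hcu⟩ := RCLike.exists_norm_mul_eq_self c
  have hu₀ : u ≠ 0 := norm_ne_zero_iff.1 (by rw [hu]; exact one_ne_zero)
  have hsplit : ∀ x : H, c • x = ((‖c‖ : ℝ) : 𝕜) • u • x := fun x => by
    rw [smul_smul, mul_comm, hcu]
  rw [hsplit, hsplit, hhom ‖c‖ (norm_pos_iff.2 hc) _ (smul_ne_zero hu₀ hg)]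
  refine (hρ.apply_eq_of_inner_eq hg ?_ ?_ ?_).symm
  · rw [norm_smul, hu, one_mul]
  · rw [norm_smul, hu, one_mul]
  · rw [inner_smul_left, inner_smul_right, ← mul_assoc, RCLike.conj_mul, hu]
    simp

theorem IsFinslerMetric.div_mul_apply_eq (hρ : IsFinslerMetric 𝕜 ρ)
    (hhom : ∀ t : ℝ, 0 < t → IsHomothetyInvariant 𝕜 ρ t) {g h : H} (hg : g ≠ 0) {b : 𝕜}
    (hb : ‖b‖ = ‖h‖⁻¹) : ‖g‖ / ‖h‖ * ρ g h = ρ (((‖g‖⁻¹ : ℝ) : 𝕜) • g) (b • h) := by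
  have hg' : 0 < ‖g‖⁻¹ := inv_pos.2 (norm_pos_iff.2 hg)
  have key := (hρ.isHomothetyInvariant_iff hg').1 (hhom _ hg') g hg h
  rw [hρ _ (smul_ne_zero (by exact_mod_cast hg'.ne') hg), hb, ← key]
  field_simp

theorem IsIsometryInvariant.div_mul_apply_eq_of_acuteAngle_eq (hI : IsIsometryInvariant 𝕜 ρ)
    (hρ : IsFinslerMetric 𝕜 ρ) (hhom : ∀ t : ℝ, 0 < t → IsHomothetyInvariant 𝕜 ρ t)
    {g h g' h' : H} (hg : g ≠ 0) (hh : h ≠ 0) (hg' : g' ≠ 0) (hh' : h' ≠ 0)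
    (hangle : acuteAngle 𝕜 g h = acuteAngle 𝕜 g' h') :
    ‖g‖ / ‖h‖ * ρ g h = ‖g'‖ / ‖h'‖ * ρ g' h' := by
  obtain ⟨b, hb, hgb⟩ := exists_norm_eq_inv_norm_inner_smul_eq (𝕜 := 𝕜) g h
  obtain ⟨b', hb', hgb'⟩ := exists_norm_eq_inv_norm_inner_smul_eq (𝕜 := 𝕜) g' h'
  have hunit : ∀ {x : H} {c : 𝕜}, x ≠ 0 → ‖c‖ = ‖x‖⁻¹ → ‖c • x‖ = 1 := fun hx hc => by
    rw [norm_smul, hc, inv_mul_cancel₀ (norm_ne_zero_iff.2 hx)]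
  have hunit_real : ∀ x : H, ‖((‖x‖⁻¹ : ℝ) : 𝕜)‖ = ‖x‖⁻¹ := fun _ => by
    rw [RCLike.norm_ofReal, abs_of_nonneg (by positivity)]
  rw [hρ.div_mul_apply_eq hhom hg hb, hρ.div_mul_apply_eq hhom hg' hb']
  refine hI.apply_eq_of_inner_eq ?_ ?_ ?_ ?_
  · exact smul_ne_zero (by simpa using hg) hg
  · rw [hunit hg (hunit_real g), hunit hg' (hunit_real g')]
  · rw [hunit hh hb, hunit hh' hb']
  · rw [hgb, hgb', acuteAngle_eq_acuteAngle_iff.1 hangle]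

theorem IsIsometryInvariant.exists_eq_div_mul_acuteAngle (hI : IsIsometryInvariant 𝕜 ρ)
    (hρ : IsFinslerMetric 𝕜 ρ) (hhom : ∀ t : ℝ, 0 < t → IsHomothetyInvariant 𝕜 ρ t) :
    ∃ ϑ : ℝ → ℝ, ∀ g h : H, g ≠ 0 → h ≠ 0 → ρ g h = ‖h‖ / ‖g‖ * ϑ (acuteAngle 𝕜 g h) := by
  let pairs := {p : H × H // p.1 ≠ 0 ∧ p.2 ≠ 0}
  let angle : pairs → ℝ := fun p => acuteAngle 𝕜 p.1.1 p.1.2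
  let F : pairs → ℝ := fun p => ‖p.1.1‖ / ‖p.1.2‖ * ρ p.1.1 p.1.2
  have hF : F.FactorsThrough angle := fun p q hpq =>
    hI.div_mul_apply_eq_of_acuteAngle_eq hρ hhom p.2.1 p.2.2 q.2.1 q.2.2 hpq
  refine ⟨Function.extend angle F 0, fun g h hg hh => ?_⟩
  rw [show acuteAngle 𝕜 g h = angle ⟨(g, h), hg, hh⟩ from rfl, hF.extend_apply]
  have : ‖g‖ ≠ 0 := norm_ne_zero_iff.2 hg
  have : ‖h‖ ≠ 0 := norm_ne_zero_iff.2 hh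
  dsimp only [F]
  field_simp

end

theorem stmt9_general {𝕜 H : Type*} [RCLike 𝕜] [NormedAddCommGroup H] [InnerProductSpace 𝕜 H]
    (ρ : H → H → ℝ)
    (hFinsler : ∀ g : H, g ≠ 0 → ∀ h : H, ∀ r : 𝕜, ρ g (r • h) = ‖r‖ * ρ g h)
    (hinv : ∀ T : H →ₗᵢ[𝕜] H, ∀ g : H, g ≠ 0 → ∀ h : H, ρ (T g) (T h) = ρ g h)
    (hcont : ∀ h : H, ContinuousOn (fun g : H => ρ g h) {x : H | x ≠ 0})
    (α β : ℝ) (hα : 0 < α) (hβ : 0 < β)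
    (hirr : Irrational (Real.log α / Real.log β))
    (hinvα : ∀ g : H, g ≠ 0 → ∀ h : H, ρ ((α : 𝕜) • g) ((α : 𝕜) • h) = ρ g h)
    (hinvβ : ∀ g : H, g ≠ 0 → ∀ h : H, ρ ((β : 𝕜) • g) ((β : 𝕜) • h) = ρ g h) :
    (∀ c : 𝕜, c ≠ 0 → ∀ T : H →ₗᵢ[𝕜] H, ∀ g : H, g ≠ 0 → ∀ h : H,
        ρ (c • T g) (c • T h) = ρ g h) ∧
      ∃ ϑ : ℝ → ℝ, ∀ g h : H, g ≠ 0 → h ≠ 0 →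
        ρ g h = ‖h‖ / ‖g‖ * ϑ (acuteAngle 𝕜 g h) := by
  have hhom : ∀ t : ℝ, 0 < t → IsHomothetyInvariant 𝕜 ρ t := fun t ht =>
    IsFinslerMetric.isHomothetyInvariant_of_irrational hFinsler hcont hα hβ hirr hinvα hinvβ ht
  refine ⟨fun c hc T g hg h => ?_,
    IsIsometryInvariant.exists_eq_div_mul_acuteAngle hinv hFinsler hhom⟩
  rw [IsIsometryInvariant.apply_smul_smul hinv hhom hc ((map_ne_zero_iff T T.injective).2 hg),
    hinv T g hg h]

/-- if an isometry-invariant Finsler metric `ρ` on `H \ {0}`, continuous in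
its first variable, is invariant with respect to homotheties with coefficients `α, β > 0`
where `ln α ≠ 0 ≠ ln β` and `ln α / ln β` is irrational, then `ρ` is invariant with
respect to every congruence; in particular there is `ϑ : [0,π/2] → ℝ` with
`ρ_g(h) = (‖h‖/‖g‖) ϑ(∠(g,h))` for all nonzero `g, h`. -/
theorem stmt9 {𝕜 H : Type*} [RCLike 𝕜] [NormedAddCommGroup H] [InnerProductSpace 𝕜 H]
    (ρ : H → H → ℝ)
    (hFinsler : ∀ g : H, g ≠ 0 → ∀ h : H, ∀ r : 𝕜, ρ g (r • h) = ‖r‖ * ρ g h)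
    (hinv : ∀ T : H →ₗᵢ[𝕜] H, ∀ g : H, g ≠ 0 → ∀ h : H, ρ (T g) (T h) = ρ g h)
    (hcont : ∀ h : H, ContinuousOn (fun g : H => ρ g h) {x : H | x ≠ 0})
    (α β : ℝ) (hα : 0 < α) (hβ : 0 < β)
    (hlnα : Real.log α ≠ 0) (hlnβ : Real.log β ≠ 0)
    (hirr : Irrational (Real.log α / Real.log β))
    (hinvα : ∀ g : H, g ≠ 0 → ∀ h : H, ρ ((α : 𝕜) • g) ((α : 𝕜) • h) = ρ g h)
    (hinvβ : ∀ g : H, g ≠ 0 → ∀ h : H, ρ ((β : 𝕜) • g) ((β : 𝕜) • h) = ρ g h) :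
    (∀ c : 𝕜, c ≠ 0 → ∀ T : H →ₗᵢ[𝕜] H, ∀ g : H, g ≠ 0 → ∀ h : H,
        ρ (c • T g) (c • T h) = ρ g h) ∧
      ∃ ϑ : ℝ → ℝ, ∀ g h : H, g ≠ 0 → h ≠ 0 →
        ρ g h = ‖h‖ / ‖g‖ * ϑ (acuteAngle 𝕜 g h) :=
  stmt9_general ρ hFinsler hinv hcont α β hα hβ hirr hinvα hinvβ
end
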